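/- arXiv:2006.06338 — 2 statements merged into one kernel-verified Lean document; each statement's English description precedes it below -/
import Mathlib

section
/- Let T(x) = ∑_{i=0}^{r-1} C(ℓ,i) x^i (1-x)^{ℓ-i} for integers 0 < r < ℓ. Then T(0) = 1, the m-th derivative of T at 0 vanishes for m = 1, 2, ..., r-1, and the r-th derivative of T at 0 equals -(ℓ)_r, where (ℓ)_r = ℓ(ℓ-1)···(ℓ-r+1) is the falling factorial. -/
/-!
`T` is the evaluation of `∑_{i<r} b_{ℓ,i}`, a partial sum of the Bernstein basis. Since the full
sum is `1`, this equals `1 - ∑_{r ≤ i ≤ ℓ} b_{ℓ,i}`. The `m`-th derivative of `b_{ℓ,i}` vanishes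
at `0` when `m < i`, and for `m = i` it equals `(ℓ)_i`; hence for `m ≤ r` only the constant `1`
(when `m = 0`) and the term `b_{ℓ,r}` (when `m = r`) contribute.
-/

open Polynomial Finset

theorem Polynomial.iteratedDeriv_eval {𝕜 : Type*} [NontriviallyNormedField 𝕜] (n : ℕ)
    (p : 𝕜[X]) : iteratedDeriv n (fun x => p.eval x) = fun x => (derivative^[n] p).eval x := by
  induction n generalizing p with
  | zero => simp
  | succ n ih =>
    have hderiv : deriv (fun x => p.eval x) = fun x => (derivative p).eval x :=
      _root_.funext fun _ => p.deriv
    rw [iteratedDeriv_succ', hderiv, ih, Function.iterate_succ_apply]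

namespace bernsteinPolynomial

variable {R : Type*} [CommRing R]

theorem sum_range_eq_one_sub_sum_Ico {n r : ℕ} (hr : r ≤ n + 1) :
    ∑ ν ∈ range r, bernsteinPolynomial R n ν =
      1 - ∑ ν ∈ Ico r (n + 1), bernsteinPolynomial R n ν := by
  rw [← sum R n, ← sum_range_add_sum_Ico _ hr, add_sub_cancel_right]

theorem iterate_derivative_sum_Ico_at_0 {n r m : ℕ} (hm : m ≤ r) (hr : r ≤ n) :
    (derivative^[m] (∑ ν ∈ Ico r (n + 1), bernsteinPolynomial R n ν)).eval 0 =
      if m = r then (n.descFactorial r : R) else 0 := by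
  rw [iterate_derivative_sum, eval_finsetSum,
    sum_eq_single_of_mem r (mem_Ico.2 ⟨le_rfl, Nat.lt_succ_of_le hr⟩)]
  · split_ifs with hmr
    · subst hmr
      rw [iterate_derivative_at_0, Nat.cast_descFactorial, Nat.cast_sub (by omega)]
    · exact iterate_derivative_at_0_eq_zero_of_lt R n (lt_of_le_of_ne hm hmr)
  · intro ν hν hνr
    exact iterate_derivative_at_0_eq_zero_of_lt R n
      (lt_of_le_of_lt hm (lt_of_le_of_ne (mem_Ico.1 hν).1 (Ne.symm hνr)))

theorem iterate_derivative_sum_range_at_0 {n r m : ℕ} (hm : m ≤ r) (hr : r ≤ n) :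
    (derivative^[m] (∑ ν ∈ range r, bernsteinPolynomial R n ν)).eval 0 =
      (if m = 0 then 1 else 0) - if m = r then (n.descFactorial r : R) else 0 := by
  rw [sum_range_eq_one_sub_sum_Ico (by omega), iterate_derivative_sub, eval_sub,
    iterate_derivative_sum_Ico_at_0 hm hr]
  rcases Nat.eq_zero_or_pos m with rfl | hm0
  · simp
  · simp [iterate_derivative_one hm0, hm0.ne']

end bernsteinPolynomial

theorem stmt_1 (r ℓ : ℕ) (hr : 0 < r) (hrl : r < ℓ)
    (T : ℝ → ℝ)
    (hT : ∀ x : ℝ, T x = ∑ i ∈ Finset.range r, (ℓ.choose i : ℝ) * x ^ i * (1 - x) ^ (ℓ - i)) :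
    T 0 = 1 ∧
    (∀ m : ℕ, 1 ≤ m → m ≤ r - 1 → iteratedDeriv m T 0 = 0) ∧
    iteratedDeriv r T 0 = -(ℓ.descFactorial r : ℝ) := by
  have hTB : T = fun x => (∑ i ∈ range r, bernsteinPolynomial ℝ ℓ i).eval x := by
    funext x
    simp [hT, eval_finsetSum, bernsteinPolynomial]
  have hderiv (m : ℕ) (hm : m ≤ r) : iteratedDeriv m T 0 =
      (if m = 0 then 1 else 0) - if m = r then (ℓ.descFactorial r : ℝ) else 0 := by
    rw [hTB, iteratedDeriv_eval]
    exact bernsteinPolynomial.iterate_derivative_sum_range_at_0 hm hrl.le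
  refine ⟨?_, fun m hm1 hmr => ?_, ?_⟩
  · simpa [hr.ne] using hderiv 0 (Nat.zero_le r)
  · rw [hderiv m (by omega), if_neg (by omega), if_neg (by omega), sub_zero]
  · simpa [hr.ne'] using hderiv r le_rfl
end

section
/- Let r, ℓ be integers with 2 ≤ r and 2r < ℓ, and let T(x) = ∑_{i=0}^{r-1} C(ℓ,i) x^i (1-x)^{ℓ-i}. For any ξ ∈ (0,1) with ℓξ < 1, the (r+1)-st derivative of T at ξ satisfies |T^{(r+1)}(ξ)| ≤ ℓ^{r+1} · 2^r. -/
/-! Differentiating the partial Bernstein sum telescopes: with s = r - 1,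
T' = -ℓ·C(ℓ-1, s)·x^s (1-x)^(ℓ-1-s). Write a^(k) for the falling factorial. Leibniz's rule for the
remaining r derivatives bounds |T^(r+1)(ξ)| by ℓ·C(ℓ-1, s) times a sum over i of
C(r, i)·s^(i)·ξ^(s-i)·(ℓ-1-s)^(r-i), and each term of the product is at most
C(r, i)·ℓ^(r+1)·(ℓξ)^(s-i) ≤ C(r, i)·ℓ^(r+1), because C(ℓ-1, s)·s^(i) ≤ (ℓ-1)^(s) ≤ ℓ^s.
Summing the binomial coefficients gives 2^r. -/

open Polynomial Finset Nat

theorem Nat.descFactorial_le_factorial (n k : ℕ) : n.descFactorial k ≤ n ! := by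
  rcases le_or_gt k n with hk | hk
  · rw [← Nat.factorial_mul_descFactorial hk]
    exact Nat.le_mul_of_pos_left _ (Nat.factorial_pos _)
  · simp [Nat.descFactorial_eq_zero_iff_lt.mpr hk]

theorem Nat.choose_mul_descFactorial_le_pow (n s i : ℕ) :
    (n - 1).choose s * s.descFactorial i ≤ n ^ s :=
  calc (n - 1).choose s * s.descFactorial i ≤ (n - 1).choose s * s ! := by
        gcongr; exact Nat.descFactorial_le_factorial s i
    _ = (n - 1).descFactorial s := by rw [Nat.descFactorial_eq_factorial_mul_choose, mul_comm]
    _ ≤ n ^ s := (Nat.descFactorial_le_pow _ _).trans (Nat.pow_le_pow_left (Nat.sub_le n 1) s)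

theorem derivative_sum_range_bernsteinPolynomial {R : Type*} [CommRing R] (n s : ℕ) :
    derivative (∑ ν ∈ range (s + 1), bernsteinPolynomial R n ν) =
      -(n : R[X]) * bernsteinPolynomial R (n - 1) s := by
  induction s with
  | zero => simp [bernsteinPolynomial.derivative_zero]
  | succ s ih =>
    rw [sum_range_succ, derivative_add, ih, bernsteinPolynomial.derivative_succ]
    ring

theorem deriv_sum_range_bernstein (n s : ℕ) :
    deriv (fun x : ℝ => ∑ ν ∈ range (s + 1), (n.choose ν : ℝ) * x ^ ν * (1 - x) ^ (n - ν)) =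
      fun x => -(n * (n - 1).choose s : ℝ) * (x ^ s * (1 - x) ^ (n - 1 - s)) := by
  have hsum : (fun x : ℝ => ∑ ν ∈ range (s + 1), (n.choose ν : ℝ) * x ^ ν * (1 - x) ^ (n - ν)) =
      fun x => (∑ ν ∈ range (s + 1), bernsteinPolynomial ℝ n ν).eval x := by
    ext x
    simp [eval_finsetSum, bernsteinPolynomial]
  ext x
  rw [hsum, Polynomial.deriv, derivative_sum_range_bernsteinPolynomial]
  simp only [bernsteinPolynomial, eval_mul, eval_neg, eval_pow, eval_sub, eval_one, eval_X,
    eval_natCast]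
  ring

theorem abs_iteratedDeriv_one_sub_pow_le {m k : ℕ} {x : ℝ} (h0 : 0 ≤ x) (h1 : x ≤ 1) :
    |iteratedDeriv k (fun y : ℝ => (1 - y) ^ m) x| ≤ m.descFactorial k := by
  rw [iteratedDeriv_comp_const_sub k (· ^ m) 1]
  dsimp only
  rw [iteratedDeriv_pow, smul_eq_mul, abs_mul, abs_mul, abs_pow, abs_neg, abs_one, one_pow,
    one_mul, Nat.abs_cast, abs_pow]
  have h : |1 - x| ≤ 1 := abs_le.mpr ⟨by linarith, by linarith⟩
  exact mul_le_of_le_one_right (Nat.cast_nonneg _) (pow_le_one₀ (abs_nonneg _) h)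

theorem abs_iteratedDeriv_pow_mul_one_sub_pow_le {a b n : ℕ} {x : ℝ} (h0 : 0 ≤ x) (h1 : x ≤ 1) :
    |iteratedDeriv n (fun y : ℝ => y ^ a * (1 - y) ^ b) x| ≤
      ∑ i ∈ range (n + 1), (n.choose i * a.descFactorial i : ℝ) * x ^ (a - i) *
        b.descFactorial (n - i) := by
  rw [iteratedDeriv_fun_mul (by fun_prop) (by fun_prop)]
  refine (abs_sum_le_sum_abs _ _).trans (sum_le_sum fun i _ => ?_)
  rw [abs_mul, abs_mul, iteratedDeriv_pow, abs_mul, Nat.abs_cast, Nat.abs_cast, abs_pow,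
    abs_of_nonneg h0, ← mul_assoc]
  gcongr
  exact abs_iteratedDeriv_one_sub_pow_le h0 h1

theorem choose_mul_descFactorial_mul_pow_le {n s i : ℕ} {x : ℝ} (h0 : 0 ≤ x) (hx : n * x ≤ 1) :
    ((n - 1).choose s * s.descFactorial i : ℝ) * x ^ (s - i) * n ^ (s + 1 - i) ≤ n ^ (s + 1) := by
  rcases le_or_gt i s with hi | hi
  · have hpow : x ^ (s - i) * (n : ℝ) ^ (s + 1 - i) = (n * x) ^ (s - i) * n := by
      rw [Nat.sub_add_comm hi, pow_succ, mul_pow]; ring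
    rw [mul_assoc, hpow, pow_succ]
    gcongr
    · exact_mod_cast Nat.choose_mul_descFactorial_le_pow n s i
    · exact mul_le_of_le_one_left (by positivity) (pow_le_one₀ (by positivity) hx)
  · simp [Nat.descFactorial_eq_zero_iff_lt.mpr hi]

theorem stmt_2_general (r ℓ : ℕ) (hr : 2 ≤ r)
    (T : ℝ → ℝ)
    (hT : ∀ x : ℝ, T x = ∑ i ∈ Finset.range r, (ℓ.choose i : ℝ) * x ^ i * (1 - x) ^ (ℓ - i))
    (ξ : ℝ) (hξ0 : 0 < ξ) (hξ1 : ξ < 1) (hℓξ : (ℓ : ℝ) * ξ < 1) :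
    |iteratedDeriv (r + 1) T ξ| ≤ (ℓ : ℝ) ^ (r + 1) * 2 ^ r := by
  obtain ⟨s, rfl⟩ : ∃ s, r = s + 1 := ⟨r - 1, by omega⟩
  rw [funext hT, iteratedDeriv_succ', deriv_sum_range_bernstein, iteratedDeriv_const_mul_field,
    abs_mul, abs_neg, abs_of_nonneg (by positivity)]
  calc (ℓ * (ℓ - 1).choose s : ℝ) *
        |iteratedDeriv (s + 1) (fun y => y ^ s * (1 - y) ^ (ℓ - 1 - s)) ξ|
      ≤ ℓ * (ℓ - 1).choose s * ∑ i ∈ range (s + 2),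
          ((s + 1).choose i * s.descFactorial i : ℝ) * ξ ^ (s - i) * ℓ ^ (s + 1 - i) := by
        gcongr
        refine (abs_iteratedDeriv_pow_mul_one_sub_pow_le hξ0.le hξ1.le).trans
          (sum_le_sum fun i _ => ?_)
        gcongr
        exact_mod_cast (Nat.descFactorial_le_pow _ _).trans (Nat.pow_le_pow_left (by omega) _)
    _ = ℓ * ∑ i ∈ range (s + 2), ((s + 1).choose i : ℝ) *
          (((ℓ - 1).choose s * s.descFactorial i : ℝ) * ξ ^ (s - i) * ℓ ^ (s + 1 - i)) := by
        rw [mul_assoc, mul_sum]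
        congr 1
        exact sum_congr rfl fun i _ => by ring
    _ ≤ ℓ * ∑ i ∈ range (s + 2), ((s + 1).choose i : ℝ) * ℓ ^ (s + 1) := by
        gcongr with i
        exact choose_mul_descFactorial_mul_pow_le hξ0.le hℓξ.le
    _ = (ℓ : ℝ) ^ (s + 1 + 1) * 2 ^ (s + 1) := by
        rw [← sum_mul, ← Nat.cast_sum, Nat.sum_range_choose]
        push_cast
        ring

theorem stmt_2 (r ℓ : ℕ) (hr : 2 ≤ r) (hrl : 2 * r < ℓ)
    (T : ℝ → ℝ)
    (hT : ∀ x : ℝ, T x = ∑ i ∈ Finset.range r, (ℓ.choose i : ℝ) * x ^ i * (1 - x) ^ (ℓ - i))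
    (ξ : ℝ) (hξ0 : 0 < ξ) (hξ1 : ξ < 1) (hℓξ : (ℓ : ℝ) * ξ < 1) :
    |iteratedDeriv (r + 1) T ξ| ≤ (ℓ : ℝ) ^ (r + 1) * 2 ^ r :=
  stmt_2_general r ℓ hr T hT ξ hξ0 hξ1 hℓξ
end
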